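/- Let a_1 ≥ a_2 ≥ ... ≥ a_L > 0 and 0 < ζ < 1 satisfy ζ a_i ≤ a_{i+1} for all i < L, and let b_1 ≤ b_2 ≤ ... ≤ b_L with b_i ≥ 0. Define l̃ = max{l : b_l ≤ a_l} (assume b_1 ≤ a_1 so the set is nonempty), and l* = argmin_l (a_l + b_l). Then a_{l̃} + b_{l̃} ≤ (1 + 1/ζ)(a_{l*} + b_{l*}). -/
import Mathlib


/-- Lepski-type lemma: with `a` nonincreasing and positive (not decreasing faster than
a factor `ζ`) and `b` nonnegative nondecreasing, the crossing index `lt = max{l : b l ≤ a l}`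
achieves the optimal bias–variance tradeoff `min_l (a l + b l)` up to a factor `1 + 1/ζ`. -/
theorem lepski_crossing (L : ℕ) (hL : 1 ≤ L) (a b : ℕ → ℝ) (ζ : ℝ)
    (hζ0 : 0 < ζ) (hζ1 : ζ < 1)
    (hapos : ∀ i, 1 ≤ i → i ≤ L → 0 < a i)
    (hadec : ∀ i j, 1 ≤ i → i ≤ j → j ≤ L → a j ≤ a i)
    (hzeta : ∀ i, 1 ≤ i → i + 1 ≤ L → ζ * a i ≤ a (i + 1))
    (hbnn : ∀ i, 1 ≤ i → i ≤ L → 0 ≤ b i)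
    (hbmono : ∀ i j, 1 ≤ i → i ≤ j → j ≤ L → b i ≤ b j)
    (lt ls : ℕ) (hlt1 : 1 ≤ lt) (hltL : lt ≤ L) (hls1 : 1 ≤ ls) (hlsL : ls ≤ L)
    (hltcross : b lt ≤ a lt)
    (hltmax : ∀ l, 1 ≤ l → l ≤ L → b l ≤ a l → l ≤ lt)
    (hlsmin : ∀ l, 1 ≤ l → l ≤ L → a ls + b ls ≤ a l + b l) :
    a lt + b lt ≤ (1 + 1 / ζ) * (a ls + b ls) := by
  have hone : (1:ℝ) < 1/ζ := by rw [lt_div_iff₀ hζ0]; linarith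
  rcases le_or_gt ls lt with h | h
  · have h1 : a lt ≤ a ls := hadec ls lt hls1 h hltL
    have h2 : 0 ≤ a ls + b ls := add_nonneg (hapos ls hls1 hlsL).le (hbnn ls hls1 hlsL)
    have : a lt + b lt ≤ 2 * (a ls + b ls) := by nlinarith [hbnn ls hls1 hlsL]
    nlinarith
  · have hle : lt + 1 ≤ ls := h
    have hL1 : lt + 1 ≤ L := le_trans hle hlsL
    have hgt : a (lt+1) < b (lt+1) := by
      by_contra hc
      push_neg at hc
      exact absurd (hltmax (lt+1) (by omega) hL1 hc) (by omega)
    have h1 : ζ * a lt ≤ a (lt+1) := hzeta lt hlt1 hL1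
    have h2 : b (lt+1) ≤ b ls := hbmono (lt+1) ls (by omega) hle hlsL
    have h3 : b lt ≤ b ls := hbmono lt ls hlt1 h.le hlsL
    have h4 : a lt ≤ (1/ζ) * b ls := by
      rw [div_mul_eq_mul_div, le_div_iff₀ hζ0]
      nlinarith
    have h5 : 0 < a ls := hapos ls hls1 hlsL
    nlinarith
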